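/- arXiv:0707.3898 — 3 statements merged into one kernel-verified Lean document; each statement's English description precedes it below -/
import Mathlib

section
/- Let Γ be a bounded Borel subset of ℝ^d with |Γ| > 0 such that |∂_r(Γ)| = O(r) as r ↓ 0. Then n_λ(Γ) − λ|Γ| = O(λ^{(d−1)/d}) as λ → ∞; that is, there exist constants C ∈ (0,∞) and λ_0 ≥ 1 such that for all λ ≥ λ_0, 0 ≤ n_λ(Γ) − λ|Γ| ≤ C λ^{(d−1)/d}. -/
open MeasureTheory Metric Set Pointwise

noncomputable section

/-- The closed axis-aligned unit cube `x + [-1/2,1/2]^d` in `ℝ^d` (with the sup norm,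
this is the closed ball of radius `1/2` around `x`). -/
def unitCube {d : ℕ} (x : Fin d → ℝ) : Set (Fin d → ℝ) :=
  Metric.closedBall x (1 / 2)

/-- `∂_r(B)`: the set of points within `ℓ_∞`-distance `r` of the topological boundary of `B`
(distance to the empty set being `+∞`). -/
def bdryNbhd {d : ℕ} (r : ℝ) (B : Set (Fin d → ℝ)) : Set (Fin d → ℝ) :=
  {x | EMetric.infEdist x (frontier B) ≤ ENNReal.ofReal r}

/-- The dilation `λ^{1/d} B`. -/
def dilate {d : ℕ} (lam : ℝ) (B : Set (Fin d → ℝ)) : Set (Fin d → ℝ) :=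
  (lam ^ (1 / (d : ℝ))) • B

/-- `Z_λ(B)`: the lattice points whose unit cube meets `λ^{1/d} B`. -/
def Zlat {d : ℕ} (lam : ℝ) (B : Set (Fin d → ℝ)) : Set (Fin d → ℤ) :=
  {z | (unitCube (fun i => (z i : ℝ)) ∩ dilate lam B).Nonempty}

/-- `n_λ(B)`: the number of cubes in the covering of `λ^{1/d} B`. -/
def nlat {d : ℕ} (lam : ℝ) (B : Set (Fin d → ℝ)) : ℕ :=
  (Zlat lam B).ncard

/-! Every point of `λ^{1/d} Γ` lies in the unit cube of its nearest lattice point, so the cubes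
indexed by `Z_λ(Γ)` cover `λ^{1/d} Γ` and `n_λ(Γ) ≥ λ|Γ|`. Cubes of distinct lattice points have
disjoint interiors, so at most `λ|Γ|` of them lie inside `λ^{1/d} Γ`. A cube that meets
`λ^{1/d} Γ` without lying inside it is connected, hence meets the frontier, and having diameter
`1` it lies in `∂_1(λ^{1/d} Γ) = λ^{1/d} ∂_{λ^{-1/d}}(Γ)`, whose volume is
`λ |∂_{λ^{-1/d}}(Γ)| = O(λ^{(d-1)/d})`. -/

open scoped ENNReal

theorem IsPreconnected.inter_frontier_nonempty {α : Type*} [TopologicalSpace α] {s t : Set α}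
    (ht : IsPreconnected t) (hts : (t ∩ s).Nonempty) (hts' : (t \ s).Nonempty) :
    (t ∩ frontier s).Nonempty := by
  by_contra hempty
  have hcover : t ⊆ interior s ∪ interior sᶜ := by
    intro x hx
    rw [interior_compl, mem_union, mem_compl_iff]
    by_contra! h
    exact hempty ⟨x, hx, h.2, h.1⟩
  rcases ht.subset_or_subset isOpen_interior isOpen_interior
      (disjoint_compl_right.mono interior_subset interior_subset) hcover with h | h
  · obtain ⟨x, hxt, hxs⟩ := hts'
    exact hxs (interior_subset (h hxt))
  · obtain ⟨x, hxt, hxs⟩ := hts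
    exact interior_subset (h hxt) hxs

theorem frontier_smul₀ {G₀ α : Type*} [GroupWithZero G₀] [MulAction G₀ α] [TopologicalSpace α]
    [ContinuousConstSMul G₀ α] {c : G₀} (hc : c ≠ 0) (s : Set α) :
    frontier (c • s) = c • frontier s :=
  ((Homeomorph.smulOfNeZero c hc).image_frontier s).symm

theorem cthickening_smul₀ {𝕜 E : Type*} [NormedField 𝕜] [NormedAddCommGroup E]
    [NormedSpace 𝕜 E] {c : 𝕜} (hc : c ≠ 0) (r : ℝ) (s : Set E) :
    cthickening (‖c‖ * r) (c • s) = c • cthickening r s := by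
  ext x
  rw [mem_smul_set_iff_inv_smul_mem₀ hc, mem_cthickening_iff, mem_cthickening_iff,
    ← smul_inv_smul₀ hc x, infEDist_smul₀ hc, inv_smul_smul₀ hc, ENNReal.smul_def, smul_eq_mul,
    ENNReal.ofReal_mul (norm_nonneg c), ← coe_nnnorm, ENNReal.ofReal_coe_nnreal]
  exact ENNReal.mul_le_mul_iff_right (by simpa using hc) ENNReal.coe_ne_top

section BoundaryNeighbourhood

variable {d : ℕ}

theorem bdryNbhd_eq_cthickening (r : ℝ) (B : Set (Fin d → ℝ)) :
    bdryNbhd r B = cthickening r (frontier B) :=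
  rfl

theorem Bornology.IsBounded.bdryNbhd {B : Set (Fin d → ℝ)} (hB : IsBounded B) (r : ℝ) :
    IsBounded (bdryNbhd r B) := by
  rw [bdryNbhd_eq_cthickening]
  exact (hB.closure.subset frontier_subset_closure).cthickening

theorem bdryNbhd_smul {c : ℝ} (hc : 0 < c) (r : ℝ) (B : Set (Fin d → ℝ)) :
    bdryNbhd (c * r) (c • B) = c • bdryNbhd r B := by
  rw [bdryNbhd_eq_cthickening, bdryNbhd_eq_cthickening, frontier_smul₀ hc.ne',
    ← cthickening_smul₀ hc.ne', Real.norm_of_nonneg hc.le]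

end BoundaryNeighbourhood

section LatticeCubes

variable {d : ℕ}

def cubeCover (A : Set (Fin d → ℝ)) : Set (Fin d → ℤ) :=
  {z | (unitCube (fun i => (z i : ℝ)) ∩ A).Nonempty}

theorem isometry_intCast_pi : Isometry fun (z : Fin d → ℤ) i => (z i : ℝ) :=
  Isometry.of_dist_eq fun z w => by simp only [dist_pi_def]; rfl

theorem volume_unitCube (x : Fin d → ℝ) : volume (unitCube x) = 1 := by
  rw [unitCube, Real.volume_pi_closedBall _ (by norm_num)]
  norm_num

theorem volume_ball_half (x : Fin d → ℝ) : volume (ball x (1 / 2)) = 1 := by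
  rw [Real.volume_pi_ball _ (by norm_num)]
  norm_num

theorem pairwise_disjoint_ball_intCast :
    Pairwise (Function.onFun Disjoint fun z : Fin d → ℤ => ball (fun i => (z i : ℝ)) (1 / 2)) := by
  intro z w hzw
  obtain ⟨i, hi⟩ := Function.ne_iff.1 hzw
  refine ball_disjoint_ball ?_
  rw [isometry_intCast_pi.dist_eq]
  linarith [Int.pairwise_one_le_dist hi, dist_le_pi_dist z w i]

theorem card_le_volume_of_unitCube_subset {A : Set (Fin d → ℝ)} (S : Finset (Fin d → ℤ))
    (hS : ∀ z ∈ S, unitCube (fun i => (z i : ℝ)) ⊆ A) : (S.card : ℝ≥0∞) ≤ volume A :=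
  calc (S.card : ℝ≥0∞) = ∑ z ∈ S, volume (ball (fun i => (z i : ℝ)) (1 / 2)) := by
        simp only [volume_ball_half, Finset.sum_const, nsmul_one]
    _ = volume (⋃ z ∈ S, ball (fun i => (z i : ℝ)) (1 / 2)) :=
        (measure_biUnion_finset (pairwise_disjoint_ball_intCast.set_pairwise _)
          fun _ _ => measurableSet_ball).symm
    _ ≤ volume A := measure_mono <| iUnion₂_subset fun z hz =>
        ball_subset_closedBall.trans (hS z hz)

theorem cubeCover_finite {A : Set (Fin d → ℝ)} (hA : Bornology.IsBounded A) :
    (cubeCover A).Finite := by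
  have hbdd : Bornology.IsBounded (cubeCover A) := by
    refine isometry_intCast_pi.antilipschitz.isBounded_preimage (hA.cthickening (δ := 1 / 2))
      |>.subset fun z ⟨x, hxz, hxA⟩ => ?_
    exact mem_cthickening_of_dist_le _ x _ _ hxA (by rw [dist_comm]; exact hxz)
  exact hbdd.isCompact_closure.finite_of_discrete.subset subset_closure

theorem measureReal_le_ncard_cubeCover {A : Set (Fin d → ℝ)} (hA : Bornology.IsBounded A) :
    volume.real A ≤ (cubeCover A).ncard := by
  have hfin := cubeCover_finite hA
  have hcover : A ⊆ ⋃ z ∈ hfin.toFinset, unitCube (fun i => (z i : ℝ)) := by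
    intro x hx
    have hround : x ∈ unitCube (fun i => (round (x i) : ℝ)) :=
      mem_closedBall.2 <| (dist_pi_le_iff (by norm_num)).2 fun i => abs_sub_round (x i)
    exact mem_biUnion (hfin.mem_toFinset.2 ⟨x, hround, hx⟩) hround
  have hvol : volume A ≤ (cubeCover A).ncard :=
    calc volume A ≤ ∑ z ∈ hfin.toFinset, volume (unitCube (fun i => (z i : ℝ))) :=
          (measure_mono hcover).trans (measure_biUnion_finset_le _ _)
      _ = (cubeCover A).ncard := by
          simp only [volume_unitCube, Finset.sum_const, nsmul_one, ncard_eq_toFinset_card _ hfin]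
  exact ENNReal.toReal_le_of_le_ofReal (Nat.cast_nonneg _) (by simpa using hvol)

theorem unitCube_subset_bdryNbhd_one {A : Set (Fin d → ℝ)} {x : Fin d → ℝ}
    (hmeet : (unitCube x ∩ A).Nonempty) (hout : ¬ unitCube x ⊆ A) :
    unitCube x ⊆ bdryNbhd 1 A := by
  obtain ⟨y, hyx, hyA⟩ := (convex_closedBall x (1 / 2)).isPreconnected.inter_frontier_nonempty
    hmeet (not_subset.1 hout)
  intro w hw
  refine mem_cthickening_of_dist_le w y 1 _ hyA ?_
  linarith [dist_triangle_right w y x, mem_closedBall.1 hw, mem_closedBall.1 hyx]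

theorem ncard_cubeCover_le {A : Set (Fin d → ℝ)} (hA : Bornology.IsBounded A) :
    ((cubeCover A).ncard : ℝ) ≤ volume.real A + volume.real (bdryNbhd 1 A) := by
  classical
  have hfin := cubeCover_finite hA
  set S := hfin.toFinset
  have hinner : ((S.filter fun z => unitCube (fun i => (z i : ℝ)) ⊆ A).card : ℝ≥0∞)
      ≤ volume A :=
    card_le_volume_of_unitCube_subset _ fun z hz => (Finset.mem_filter.1 hz).2
  have hboundary : ((S.filter fun z => ¬ unitCube (fun i => (z i : ℝ)) ⊆ A).card : ℝ≥0∞)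
      ≤ volume (bdryNbhd 1 A) :=
    card_le_volume_of_unitCube_subset _ fun z hz =>
      unitCube_subset_bdryNbhd_one (hfin.mem_toFinset.1 (Finset.mem_filter.1 hz).1)
        (Finset.mem_filter.1 hz).2
  have hcount : ((cubeCover A).ncard : ℝ≥0∞) ≤ volume A + volume (bdryNbhd 1 A) := by
    rw [ncard_eq_toFinset_card _ hfin, ← Finset.card_filter_add_card_filter_not
      (fun z => unitCube (fun i => (z i : ℝ)) ⊆ A), Nat.cast_add]
    exact add_le_add hinner hboundary
  have hA' := hA.measure_lt_top (μ := volume)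
  have hbdry := (hA.bdryNbhd 1).measure_lt_top (μ := volume)
  have hreal := ENNReal.toReal_mono (ENNReal.add_lt_top.2 ⟨hA', hbdry⟩).ne hcount
  rwa [ENNReal.toReal_natCast, ENNReal.toReal_add hA'.ne hbdry.ne] at hreal

end LatticeCubes

section Dilation

variable {d : ℕ}

theorem nlat_eq_ncard_cubeCover (lam : ℝ) (B : Set (Fin d → ℝ)) :
    nlat lam B = (cubeCover (dilate lam B)).ncard :=
  rfl

theorem measureReal_dilate (hd : d ≠ 0) {lam : ℝ} (hlam : 0 ≤ lam) (B : Set (Fin d → ℝ)) :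
    volume.real (dilate lam B) = lam * volume.real B := by
  rw [measureReal_def, measureReal_def, dilate, Measure.addHaar_smul_of_nonneg _ (by positivity),
    Module.finrank_fin_fun, one_div, Real.rpow_inv_natCast_pow hlam hd, ENNReal.toReal_mul,
    ENNReal.toReal_ofReal hlam]

theorem bdryNbhd_one_dilate {lam : ℝ} (hlam : 0 < lam) (B : Set (Fin d → ℝ)) :
    bdryNbhd 1 (dilate lam B) = dilate lam (bdryNbhd (lam ^ (1 / (d : ℝ)))⁻¹ B) := by
  have hc : 0 < lam ^ (1 / (d : ℝ)) := by positivity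
  rw [dilate, dilate, ← bdryNbhd_smul hc, mul_inv_cancel₀ hc.ne']

end Dilation

theorem covering_count_asymptotics_general (d : ℕ) (hd : 1 ≤ d)
    (Γ : Set (Fin d → ℝ)) (hbdd : Bornology.IsBounded Γ)
    -- regularity: `|∂_r(Γ)| = O(r)` as `r ↓ 0`
    (hreg : ∃ C₀ r₀ : ℝ, 0 < C₀ ∧ 0 < r₀ ∧ ∀ r : ℝ, 0 < r → r ≤ r₀ →
      (volume (bdryNbhd r Γ)).toReal ≤ C₀ * r) :
    ∃ C : ℝ, 0 < C ∧ ∃ lam₀ : ℝ, 1 ≤ lam₀ ∧ ∀ lam : ℝ, lam₀ ≤ lam →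
      lam * (volume Γ).toReal ≤ (nlat lam Γ : ℝ) ∧
      (nlat lam Γ : ℝ) - lam * (volume Γ).toReal ≤ C * lam ^ (((d : ℝ) - 1) / d) := by
  obtain ⟨C₀, r₀, hC₀, hr₀, hreg⟩ := hreg
  refine ⟨C₀, hC₀, max 1 (r₀⁻¹ ^ d), le_max_left _ _, fun lam hlam => ?_⟩
  have hd0 : d ≠ 0 := by omega
  have hlam0 : 0 < lam := by linarith [le_max_left 1 (r₀⁻¹ ^ d)]
  set c := lam ^ (1 / (d : ℝ))
  have hc : 0 < c := by positivity
  have hcr : c⁻¹ ≤ r₀ := by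
    refine inv_le_of_inv_le₀ hr₀ ?_
    calc r₀⁻¹ = (r₀⁻¹ ^ d) ^ (1 / (d : ℝ)) := by
          rw [one_div, Real.pow_rpow_inv_natCast (by positivity) hd0]
      _ ≤ c := Real.rpow_le_rpow (by positivity) (le_of_max_le_right hlam) (by positivity)
  have hbdry : volume.real (bdryNbhd 1 (dilate lam Γ)) ≤ C₀ * lam ^ (((d : ℝ) - 1) / d) :=
    calc volume.real (bdryNbhd 1 (dilate lam Γ)) = lam * volume.real (bdryNbhd c⁻¹ Γ) := by
          rw [bdryNbhd_one_dilate hlam0, measureReal_dilate hd0 hlam0.le]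
      _ ≤ lam * (C₀ * c⁻¹) := mul_le_mul_of_nonneg_left (hreg _ (inv_pos.2 hc) hcr) hlam0.le
      _ = C₀ * lam ^ (((d : ℝ) - 1) / d) := by
          rw [show ((d : ℝ) - 1) / d = 1 - 1 / d by field_simp, Real.rpow_sub hlam0, Real.rpow_one]
          ring
  have hA : Bornology.IsBounded (dilate lam Γ) := hbdd.smul₀ c
  rw [← measureReal_def, nlat_eq_ncard_cubeCover, ← measureReal_dilate hd0 hlam0.le]
  exact ⟨measureReal_le_ncard_cubeCover hA, by linarith [ncard_cubeCover_le hA]⟩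

theorem covering_count_asymptotics (d : ℕ) (hd : 1 ≤ d)
    (Γ : Set (Fin d → ℝ)) (hbdd : Bornology.IsBounded Γ) (hmeas : MeasurableSet Γ)
    (hpos : 0 < volume Γ)
    -- regularity: `|∂_r(Γ)| = O(r)` as `r ↓ 0`
    (hreg : ∃ C₀ r₀ : ℝ, 0 < C₀ ∧ 0 < r₀ ∧ ∀ r : ℝ, 0 < r → r ≤ r₀ →
      (volume (bdryNbhd r Γ)).toReal ≤ C₀ * r) :
    ∃ C : ℝ, 0 < C ∧ ∃ lam₀ : ℝ, 1 ≤ lam₀ ∧ ∀ lam : ℝ, lam₀ ≤ lam →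
      lam * (volume Γ).toReal ≤ (nlat lam Γ : ℝ) ∧
      (nlat lam Γ : ℝ) - lam * (volume Γ).toReal ≤ C * lam ^ (((d : ℝ) - 1) / d) :=
  covering_count_asymptotics_general d hd Γ hbdd hreg
end
end

section
/- Let Γ ⊆ ℝ^d be a set with nonempty topological boundary ∂Γ, and let r, s > 0. Then ∂_r(Γ ∩ ∂_s(Γ)) ⊆ ∂_{r+s}(Γ); that is, every point x ∈ ℝ^d with d_∞(x, ∂(Γ ∩ ∂_s(Γ))) ≤ r satisfies d_∞(x, ∂Γ) ≤ r + s. -/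
open MeasureTheory Metric Set

noncomputable section

/-! The frontier of `Γ ∩ ∂_s(Γ)` lies in the closed set `∂_s(Γ)`, so every point of it is within
`s` of `∂Γ`; a point within `r` of that frontier is then within `r + s` of `∂Γ` by the triangle
inequality for the distance to a set. -/

theorem Metric.infEDist_le_infEDist_add_of_forall_mem {α : Type*} [PseudoEMetricSpace α]
    {s t : Set α} {a : ENNReal} (h : ∀ y ∈ s, infEDist y t ≤ a) (x : α) :
    infEDist x t ≤ infEDist x s + a := by
  rw [infEDist.eq_1 x s, ENNReal.iInf₂_add]
  exact le_iInf₂ fun y hy =>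
    infEDist_le_edist_add_infEDist.trans (add_le_add le_rfl (h y hy))

theorem frontier_inter_subset_of_isClosed {X : Type*} [TopologicalSpace X] {s t : Set X}
    (ht : IsClosed t) : frontier (s ∩ t) ⊆ t :=
  frontier_subset_closure.trans (closure_minimal inter_subset_right ht)

theorem isClosed_bdryNbhd {d : ℕ} (r : ℝ) (B : Set (Fin d → ℝ)) : IsClosed (bdryNbhd r B) :=
  isClosed_le continuous_infEDist continuous_const

theorem bdryNbhd_subset_of_frontier_subset {d : ℕ} {r s : ℝ} (hr : 0 ≤ r) (hs : 0 ≤ s)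
    {A B : Set (Fin d → ℝ)} (hA : frontier A ⊆ bdryNbhd s B) :
    bdryNbhd r A ⊆ bdryNbhd (r + s) B := fun x hx =>
  calc infEDist x (frontier B)
      ≤ infEDist x (frontier A) + ENNReal.ofReal s :=
        infEDist_le_infEDist_add_of_forall_mem (fun _ hy => hA hy) x
    _ ≤ ENNReal.ofReal r + ENNReal.ofReal s := add_le_add hx le_rfl
    _ = ENNReal.ofReal (r + s) := (ENNReal.ofReal_add hr hs).symm

theorem bdryNbhd_inter_bdryNbhd_subset_general (d : ℕ) (Γ : Set (Fin d → ℝ))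
    (r s : ℝ) (hr : 0 < r) (hs : 0 < s) :
    bdryNbhd r (Γ ∩ bdryNbhd s Γ) ⊆ bdryNbhd (r + s) Γ :=
  bdryNbhd_subset_of_frontier_subset hr.le hs.le
    (frontier_inter_subset_of_isClosed (isClosed_bdryNbhd s Γ))

theorem bdryNbhd_inter_bdryNbhd_subset (d : ℕ) (Γ : Set (Fin d → ℝ))
    (hfr : (frontier Γ).Nonempty) (r s : ℝ) (hr : 0 < r) (hs : 0 < s) :
    bdryNbhd r (Γ ∩ bdryNbhd s Γ) ⊆ bdryNbhd (r + s) Γ :=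
  bdryNbhd_inter_bdryNbhd_subset_general d Γ r s hr hs
end
end

section
/- Let k be an even positive integer. There exists a constant C ∈ (0,∞) depending only on k such that the following holds. Let V be a finite index set of cardinality n, let (Ȳ_z)_{z∈V} be real random variables on a common probability space with E[Ȳ_z] = 0 and E[|Ȳ_z|^k] ≤ M^k for all z ∈ V (for some M < ∞), and let ~ be a symmetric relation on V such that for each z ∈ V, card{w ∈ V : w ≠ z, w ~ z} ≤ D, and such that for every z ∈ V, Ȳ_z is independent of the family (Ȳ_w : w ∈ V, w ≠ z, w ≁ z). Then E[(∑_{z∈V} Ȳ_z)^k] ≤ C M^k n^{k/2} (D + 1)^{k/2}. -/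
/-!
Expanding the power, `E[(∑ z, Y z)^k] = ∑_{f : Fin k → V} E[∏ i, Y (f i)]`. A term vanishes unless
`f` is neighbourly: every `f j` equals or is related to some `f i` with `i ≠ j`; otherwise `Y (f j)`
is independent of the remaining factors and centred. Each term is at most `k M^k`, since a product
of `k` numbers is at most the largest `k`-th power. A neighbourly `f` is compatible with some
fixed-point-free `σ`, i.e. `f j` lies in the neighbourhood of `f (σ j)` for all `j`. For fixed `σ`,
some index has at most one `σ`-preimage (pigeonhole); dropping that constraint and the index itself
removes at most two constraints while trading `n` free choices for `D + 1` neighbourhood choices,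
so there are at most `n^(k/2) (D+1)^(k/2)` compatible maps.
-/

open Finset MeasureTheory ProbabilityTheory

section Counting

variable {ι V : Type*} [Fintype ι] [DecidableEq ι] [Fintype V] [DecidableEq V]

def compatibleMaps (nbhd : V → Finset V) (σ : ι → ι) (S : Finset ι) : Finset (ι → V) :=
  {f | ∀ i ∈ S, f i ∈ nbhd (f (σ i))}

variable {nbhd : V → Finset V} {σ : ι → ι} {m : ℕ}

lemma compatibleMaps_anti {S T : Finset ι} (h : S ⊆ T) :
    compatibleMaps nbhd σ T ⊆ compatibleMaps nbhd σ S := by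
  intro f hf
  simp only [compatibleMaps, mem_filter, mem_univ, true_and] at hf ⊢
  exact fun i hi => hf i (h hi)

lemma card_compatibleMaps_mul_le_card_erase (hm : ∀ w, #(nbhd w) ≤ m) {S : Finset ι} {j : ι}
    (hj : j ∈ S) (hσj : σ j ≠ j) (hpre : ∀ i ∈ S, σ i ≠ j) :
    #(compatibleMaps nbhd σ S) * Fintype.card V ≤ m * #(compatibleMaps nbhd σ (S.erase j)) := by
  set T := (compatibleMaps nbhd σ (S.erase j)).biUnion fun g => {g} ×ˢ nbhd (g (σ j))
  have hmaps : Set.MapsTo (fun p : (ι → V) × V => (Function.update p.1 j p.2, p.1 j))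
      ↑(compatibleMaps nbhd σ S ×ˢ (univ : Finset V)) ↑T := by
    rintro ⟨f, v⟩ hf
    simp only [coe_product, Set.mem_prod, mem_coe, compatibleMaps, mem_filter, mem_univ,
      true_and] at hf
    simp only [T, coe_biUnion, mem_coe, compatibleMaps, mem_filter, mem_univ, true_and,
      Set.mem_iUnion, mem_product, mem_singleton, exists_prop]
    refine ⟨_, fun i hi => ?_, rfl, ?_⟩
    · rw [Function.update_of_ne (hpre i (mem_of_mem_erase hi)),
        Function.update_of_ne (ne_of_mem_erase hi)]
      exact hf.1 i (mem_of_mem_erase hi)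
    · rw [Function.update_of_ne hσj]
      exact hf.1 j hj
  have hinj : Set.InjOn (fun p : (ι → V) × V => (Function.update p.1 j p.2, p.1 j))
      ↑(compatibleMaps nbhd σ S ×ˢ (univ : Finset V)) := by
    rintro ⟨f, v⟩ - ⟨f', v'⟩ - h
    simp only [Prod.mk.injEq] at h ⊢
    obtain ⟨hupd, hj⟩ := h
    refine ⟨funext fun i => ?_, by simpa using congrFun hupd j⟩
    by_cases hi : i = j
    · exact hi ▸ hj
    · simpa [Function.update_of_ne hi] using congrFun hupd i
  calc #(compatibleMaps nbhd σ S) * Fintype.card V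
      = #(compatibleMaps nbhd σ S ×ˢ univ) := by rw [card_product, card_univ]
    _ ≤ #T := card_le_card_of_injOn _ hmaps hinj
    _ ≤ #(compatibleMaps nbhd σ (S.erase j)) * m :=
        card_biUnion_le_card_mul _ _ _ fun g _ => by simpa using hm (g (σ j))
    _ = _ := mul_comm _ _

lemma card_compatibleMaps_mul_pow_le (hm : ∀ w, #(nbhd w) ≤ m) (hσ : ∀ i, σ i ≠ i) (r : ℕ) :
    ∀ S : Finset ι, 2 * r ≤ #S → #(compatibleMaps nbhd σ S) * Fintype.card V ^ r ≤
      Fintype.card V ^ Fintype.card ι * m ^ r := by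
  induction r with
  | zero => intro S _; simpa using card_le_univ (compatibleMaps nbhd σ S)
  | succ r ih =>
    intro S hS
    -- pigeonhole: the fibres of `σ` over `S` are disjoint subsets of `S`
    obtain ⟨j, hjS, hfib⟩ : ∃ j ∈ S, #{i ∈ S | σ i = j} < 2 :=
      exists_card_fiber_lt_of_card_lt_mul (by omega)
    set F := {i ∈ S | σ i = j}
    have hj : j ∈ S \ F := by simp [F, hjS, hσ j]
    have hpre : ∀ i ∈ S \ F, σ i ≠ j := by intro i hi; simp_all [F]
    have hcard : 2 * r ≤ #((S \ F).erase j) := by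
      have hFS : F ⊆ S := filter_subset _ _
      rw [card_erase_of_mem hj, card_sdiff_of_subset hFS]
      omega
    calc #(compatibleMaps nbhd σ S) * Fintype.card V ^ (r + 1)
        ≤ #(compatibleMaps nbhd σ (S \ F)) * Fintype.card V * Fintype.card V ^ r := by
          rw [pow_succ', ← mul_assoc]
          gcongr
          exact compatibleMaps_anti sdiff_subset
      _ ≤ m * #(compatibleMaps nbhd σ ((S \ F).erase j)) * Fintype.card V ^ r :=
          Nat.mul_le_mul_right _ (card_compatibleMaps_mul_le_card_erase hm hj (hσ j) hpre)
      _ ≤ m * (Fintype.card V ^ Fintype.card ι * m ^ r) := by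
          rw [mul_assoc]
          exact Nat.mul_le_mul_left _ (ih _ hcard)
      _ = Fintype.card V ^ Fintype.card ι * m ^ (r + 1) := by ring

lemma card_compatibleMaps_univ_le (hm : ∀ w, #(nbhd w) ≤ m) (hσ : ∀ i, σ i ≠ i) {r : ℕ}
    (hr : Fintype.card ι = 2 * r) :
    #(compatibleMaps nbhd σ univ) ≤ Fintype.card V ^ r * m ^ r := by
  have key := card_compatibleMaps_mul_pow_le hm hσ r univ (by rw [card_univ, hr])
  have hle_card_fun : #(compatibleMaps nbhd σ univ) ≤ Fintype.card V ^ r * Fintype.card V ^ r := by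
    simpa [hr, two_mul, pow_add] using card_le_univ (compatibleMaps nbhd σ univ)
  rw [hr, two_mul, pow_add] at key
  rcases (Fintype.card V ^ r).eq_zero_or_pos with h0 | hpos
  · simpa [h0] using hle_card_fun
  · exact Nat.le_of_mul_le_mul_right (by linarith) hpos

variable (ι) in
def neighbourlyMaps (nbhd : V → Finset V) : Finset (ι → V) :=
  {f | ∀ j, ∃ i ≠ j, f j ∈ nbhd (f i)}

lemma card_neighbourlyMaps_le (hm : ∀ w, #(nbhd w) ≤ m) {r : ℕ} (hr : Fintype.card ι = 2 * r) :
    #(neighbourlyMaps ι nbhd) ≤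
      Fintype.card ι ^ Fintype.card ι * (Fintype.card V ^ r * m ^ r) := by
  set derangements : Finset (ι → ι) := {σ | ∀ i, σ i ≠ i}
  calc #(neighbourlyMaps ι nbhd)
      ≤ #(derangements.biUnion fun σ => compatibleMaps nbhd σ univ) := by
        refine card_le_card fun f hf => ?_
        simp only [neighbourlyMaps, mem_filter, mem_univ, true_and] at hf
        choose σ hσ hf using hf
        simp only [mem_biUnion, compatibleMaps, derangements, mem_filter, mem_univ, true_and]
        exact ⟨σ, hσ, fun i _ => hf i⟩
    _ ≤ #derangements * (Fintype.card V ^ r * m ^ r) :=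
        card_biUnion_le_card_mul _ _ _ fun σ hσ =>
          card_compatibleMaps_univ_le hm (by simpa [derangements] using hσ) hr
    _ ≤ Fintype.card ι ^ Fintype.card ι * (Fintype.card V ^ r * m ^ r) := by
        gcongr
        simpa using card_le_univ derangements

end Counting

lemma card_filter_eq_or_le {V : Type*} [Fintype V] [DecidableEq V] {rel : V → V → Prop}
    [DecidableRel rel] {z : V} {D : ℕ} (hD : ({w | w ≠ z ∧ rel w z} : Set V).ncard ≤ D) :
    #{w | w = z ∨ rel w z} ≤ D + 1 := by
  rw [Set.ncard_eq_toFinset_card', Set.toFinset_ofPred] at hD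
  calc #{w | w = z ∨ rel w z} ≤ #(insert z ({w | w ≠ z ∧ rel w z} : Finset V)) :=
        card_le_card fun w hw => by by_cases w = z <;> simp_all
    _ ≤ D + 1 := (card_insert_le _ _).trans (by omega)

lemma prod_le_sum_pow_card {ι : Type*} {s : Finset ι} {a : ι → ℝ} (hs : s.Nonempty)
    (ha : ∀ i ∈ s, 0 ≤ a i) : ∏ i ∈ s, a i ≤ ∑ i ∈ s, a i ^ #s := by
  obtain ⟨j, hj, hmax⟩ := s.exists_max_image a hs
  calc ∏ i ∈ s, a i ≤ ∏ _i ∈ s, a j := prod_le_prod ha hmax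
    _ = a j ^ #s := prod_const _
    _ ≤ ∑ i ∈ s, a i ^ #s := single_le_sum (fun i hi => pow_nonneg (ha i hi) _) hj

section Moments

variable {Ω ι : Type*} [MeasurableSpace Ω] {P : Measure Ω} [Fintype ι] {X : ι → Ω → ℝ}

lemma abs_prod_le_sum_abs_pow [Nonempty ι] (x : ι → ℝ) :
    |∏ i, x i| ≤ ∑ i, |x i| ^ Fintype.card ι := by
  rw [abs_prod]
  exact prod_le_sum_pow_card univ_nonempty fun i _ => abs_nonneg (x i)

lemma integrable_prod_of_integrable_abs_pow [Nonempty ι] (hX : ∀ i, AEStronglyMeasurable (X i) P)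
    (hint : ∀ i, Integrable (fun ω => |X i ω| ^ Fintype.card ι) P) :
    Integrable (fun ω => ∏ i, X i ω) P :=
  (integrable_finsetSum univ fun i _ => hint i).mono'
    (aestronglyMeasurable_fun_prod _ fun i _ => hX i)
    (ae_of_all _ fun _ => abs_prod_le_sum_abs_pow _)

lemma integral_prod_le_card_mul [Nonempty ι] (hX : ∀ i, AEStronglyMeasurable (X i) P)
    (hint : ∀ i, Integrable (fun ω => |X i ω| ^ Fintype.card ι) P) {B : ℝ}
    (hB : ∀ i, ∫ ω, |X i ω| ^ Fintype.card ι ∂P ≤ B) :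
    ∫ ω, ∏ i, X i ω ∂P ≤ Fintype.card ι * B :=
  calc ∫ ω, ∏ i, X i ω ∂P ≤ ∫ ω, ∑ i, |X i ω| ^ Fintype.card ι ∂P :=
        integral_mono (integrable_prod_of_integrable_abs_pow hX hint)
          (integrable_finsetSum univ fun i _ => hint i)
          fun ω => (le_abs_self _).trans (abs_prod_le_sum_abs_pow _)
    _ = ∑ i, ∫ ω, |X i ω| ^ Fintype.card ι ∂P := integral_finsetSum _ fun i _ => hint i
    _ ≤ ∑ _i : ι, B := sum_le_sum fun i _ => hB i
    _ = Fintype.card ι * B := by simp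

lemma integral_prod_eq_zero_of_indepFun [DecidableEq ι] {V : Type*} {Y : V → Ω → ℝ}
    {p : V → Prop} {f : ι → V} {j : ι} (hY : ∀ z, AEStronglyMeasurable (Y z) P)
    (hp : ∀ i ≠ j, p (f i)) (hind : IndepFun (Y (f j)) (fun ω (w : {w // p w}) => Y w ω) P)
    (hmean : ∫ ω, Y (f j) ω ∂P = 0) :
    ∫ ω, ∏ i, Y (f i) ω ∂P = 0 := by
  have hrest : IndepFun (Y (f j)) (fun ω => ∏ i : {i // i ≠ j}, Y (f i) ω) P :=
    hind.comp (φ := id) (ψ := fun y : {w // p w} → ℝ => ∏ i : {i // i ≠ j}, y ⟨f i, hp i i.2⟩)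
      measurable_id (by fun_prop)
  have := hrest.integral_mul_eq_mul_integral (hY _)
    (aestronglyMeasurable_fun_prod _ fun i _ => hY _)
  simp_rw [Fintype.prod_eq_mul_prod_subtype_ne _ j]
  simpa [hmean] using this

lemma integral_sum_pow_le_card_mul {V : Type*} [Fintype V] {Y : V → Ω → ℝ} {k : ℕ}
    {s : Finset (Fin k → V)} {B : ℝ}
    (hint : ∀ f : Fin k → V, Integrable (fun ω => ∏ i, Y (f i) ω) P)
    (hvanish : ∀ f ∉ s, ∫ ω, ∏ i, Y (f i) ω ∂P = 0)
    (hbound : ∀ f ∈ s, ∫ ω, ∏ i, Y (f i) ω ∂P ≤ B) :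
    ∫ ω, (∑ z, Y z ω) ^ k ∂P ≤ #s * B :=
  calc ∫ ω, (∑ z, Y z ω) ^ k ∂P = ∑ f : Fin k → V, ∫ ω, ∏ i, Y (f i) ω ∂P := by
        simp_rw [Fintype.sum_pow]
        exact integral_finsetSum _ fun f _ => hint f
    _ = ∑ f ∈ s, ∫ ω, ∏ i, Y (f i) ω ∂P :=
        (sum_subset (subset_univ _) fun f _ hf => hvanish f hf).symm
    _ ≤ #s * B := by simpa using sum_le_card_nsmul _ _ _ hbound

end Moments

theorem kth_moment_bound_local_dependence (k : ℕ) (hk : 0 < k) (hke : Even k) :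
    ∃ C : ℝ, 0 < C ∧
      ∀ {Ω : Type*} [MeasurableSpace Ω] (P : Measure Ω) [IsProbabilityMeasure P]
        {V : Type*} [Fintype V] (Y : V → Ω → ℝ),
        (∀ z, Measurable (Y z)) →
        (∀ z, Integrable (Y z) P) →
        (∀ z, ∫ ω, Y z ω ∂P = 0) →
        ∀ M : ℝ,
        (∀ z, Integrable (fun ω => |Y z ω| ^ k) P) →
        (∀ z, ∫ ω, |Y z ω| ^ k ∂P ≤ M ^ k) →
        ∀ rel : V → V → Prop, Symmetric rel →
        ∀ D : ℕ, (∀ z, ({w | w ≠ z ∧ rel w z} : Set V).ncard ≤ D) →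
        (∀ z : V, IndepFun (Y z)
          (fun ω => fun w : {w : V // w ≠ z ∧ ¬ rel w z} => Y w.1 ω) P) →
        ∫ ω, (∑ z, Y z ω) ^ k ∂P ≤
          C * M ^ k * (Fintype.card V : ℝ) ^ (k / 2) * ((D : ℝ) + 1) ^ (k / 2) := by
  classical
  refine ⟨(k : ℝ) ^ (k + 1), by positivity, ?_⟩
  intro Ω _ P _ V _ Y _ hYi hY0 M hYk hYkM rel hrel D hD hindep
  have : Nonempty (Fin k) := ⟨⟨0, hk⟩⟩
  set nbhd : V → Finset V := fun z => {w | w = z ∨ rel w z}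
  have hcount := card_neighbourlyMaps_le (ι := Fin k) (fun z => card_filter_eq_or_le (hD z))
    (by rw [Fintype.card_fin, Nat.two_mul_div_two_of_even hke])
  have hvanish : ∀ f ∉ neighbourlyMaps (Fin k) nbhd, ∫ ω, ∏ i, Y (f i) ω ∂P = 0 := by
    intro f hf
    simp only [neighbourlyMaps, nbhd, mem_filter, mem_univ, true_and, not_forall,
      not_exists, not_and, not_or] at hf
    obtain ⟨j, hj⟩ := hf
    exact integral_prod_eq_zero_of_indepFun (fun z => (hYi z).1)
      (fun i hi => ⟨Ne.symm (hj i hi).1, fun h => (hj i hi).2 (hrel h)⟩) (hindep (f j)) (hY0 _)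
  have hbound : ∀ f : Fin k → V, ∫ ω, ∏ i, Y (f i) ω ∂P ≤ k * M ^ k := fun f => by
    simpa using integral_prod_le_card_mul (X := fun i => Y (f i)) (fun i => (hYi _).1)
      (by simpa using fun i => hYk (f i)) (by simpa using fun i => hYkM (f i))
  have hMk : 0 ≤ M ^ k := hke.pow_nonneg M
  calc ∫ ω, (∑ z, Y z ω) ^ k ∂P ≤ #(neighbourlyMaps (Fin k) nbhd) * (k * M ^ k) :=
        integral_sum_pow_le_card_mul (fun f => integrable_prod_of_integrable_abs_pow
          (fun i => (hYi _).1) (by simpa using fun i => hYk (f i))) hvanish fun f _ => hbound f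
    _ ≤ (k ^ k * (Fintype.card V ^ (k / 2) * (D + 1) ^ (k / 2)) : ℕ) * (k * M ^ k) := by
        gcongr
        simpa using hcount
    _ = _ := by push_cast; ring
end
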